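/- arXiv:2111.01085 — 4 statements merged into one kernel-verified Lean document; each statement's English description precedes it below -/
import Mathlib

section
/- Let α, β, α₁, β₁ ∈ k with 2β = 0 and 2β₁ = 0 in k, and suppose that the ideals (t⁶ + αt¹⁰, t⁹ + βt¹⁰) and (t⁶ + α₁t¹⁰, t⁹ + β₁t¹⁰) of A = k⟦t⁵, t⁶, t⁹⟧ are equal and are Ulrich ideals of A. Then α = α₁ and β = β₁. -/
noncomputable section

open PowerSeries

set_option synthInstance.maxHeartbeats 400000
set_option maxHeartbeats 800000

variable (k : Type*) [Field k]

/-- The subalgebra of `k⟦t⟧` consisting of power series supported on an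
additive submonoid `S ⊆ ℕ` (the "semigroup ring" of `S`). -/
def semigroupRing (S : AddSubmonoid ℕ) : Subalgebra k (PowerSeries k) where
  carrier := {f | ∀ n : ℕ, coeff n f ≠ 0 → n ∈ S}
  zero_mem' := by intro n hn; simp at hn
  add_mem' := by
    intro f g hf hg n hn
    by_contra h
    exact hn (by
      rw [map_add, of_not_not fun h1 => h (hf n h1), of_not_not fun h2 => h (hg n h2), add_zero])
  one_mem' := by
    intro n hn
    rw [coeff_one] at hn
    simp only [ne_eq, ite_eq_right_iff, not_forall] at hn
    exact hn.1 ▸ S.zero_mem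
  mul_mem' := by
    intro f g hf hg n hn
    rw [coeff_mul] at hn
    obtain ⟨p, hp, hne⟩ := Finset.exists_ne_zero_of_sum_ne_zero hn
    rw [Finset.HasAntidiagonal.mem_antidiagonal] at hp
    exact hp ▸ S.add_mem (hf p.1 (left_ne_zero_of_mul hne)) (hg p.2 (right_ne_zero_of_mul hne))
  algebraMap_mem' := by
    intro a n hn
    have : (algebraMap k (PowerSeries k)) a = C a := rfl
    rw [this, coeff_C] at hn
    simp only [ne_eq, ite_eq_right_iff, not_forall] at hn
    exact hn.1 ▸ S.zero_mem

lemma X_pow_mem {S : AddSubmonoid ℕ} {n : ℕ} (hn : n ∈ S) :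
    (X : PowerSeries k) ^ n ∈ semigroupRing k S := by
  intro m hm
  rw [coeff_X_pow] at hm
  simp only [ne_eq, ite_eq_right_iff, not_forall] at hm
  exact hm.1 ▸ hn

/-- The maximal ideal of a subalgebra of `k⟦t⟧`: the kernel of the constant-coefficient map. -/
def maximalIdealOf (A : Subalgebra k (PowerSeries k)) : Ideal A :=
  RingHom.ker ((constantCoeff (R := k)).comp A.val.toRingHom)

/-- `I` is an Ulrich ideal of `A`: `I` is `m`-primary, and there is `a ∈ I` such that `(a)`
is a reduction of `I`, `I ≠ (a)`, `I² = aI`, and `I/I²` is a free `A/I`-module. -/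
def IsUlrichIdeal (A : Subalgebra k (PowerSeries k)) (I : Ideal A) : Prop :=
  I.IsPrimary ∧ I.radical = maximalIdealOf k A ∧
  ∃ a ∈ I, (∃ n : ℕ, I ^ (n + 1) = Ideal.span {a} * I ^ n) ∧
    I ≠ Ideal.span {a} ∧
    I ^ 2 = Ideal.span {a} * I ∧
    Module.Free (A ⧸ I) I.Cotangent

/-- `A = k⟦t⁵,t⁶,t⁹⟧`. -/
def A569 : Subalgebra k (PowerSeries k) :=
  semigroupRing k (AddSubmonoid.closure ({5, 6, 9} : Set ℕ))

lemma mem569 {n : ℕ} (a b c : ℕ) (h : a * 5 + b * 6 + c * 9 = n) :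
    n ∈ AddSubmonoid.closure ({5, 6, 9} : Set ℕ) := by
  subst h
  have h5 : (5 : ℕ) ∈ AddSubmonoid.closure ({5, 6, 9} : Set ℕ) :=
    AddSubmonoid.subset_closure (by norm_num)
  have h6 : (6 : ℕ) ∈ AddSubmonoid.closure ({5, 6, 9} : Set ℕ) :=
    AddSubmonoid.subset_closure (by norm_num)
  have h9 : (9 : ℕ) ∈ AddSubmonoid.closure ({5, 6, 9} : Set ℕ) :=
    AddSubmonoid.subset_closure (by norm_num)
  simpa [smul_eq_mul] using
    add_mem (add_mem (nsmul_mem h5 a) (nsmul_mem h6 b)) (nsmul_mem h9 c)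

/-- `t⁶ + αt¹⁰` as an element of `A = k⟦t⁵,t⁶,t⁹⟧`. -/
def f569 (α : k) : A569 k :=
  ⟨X ^ 6 + α • X ^ 10, by
    refine add_mem (X_pow_mem k (mem569 0 1 0 (by norm_num)))
      (Subalgebra.smul_mem _ (X_pow_mem k (mem569 2 0 0 (by norm_num))) α)⟩

/-- `t⁹ + βt¹⁰` as an element of `A = k⟦t⁵,t⁶,t⁹⟧`. -/
def g569 (β : k) : A569 k :=
  ⟨X ^ 9 + β • X ^ 10, by
    refine add_mem (X_pow_mem k (mem569 0 0 1 (by norm_num)))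
      (Subalgebra.smul_mem _ (X_pow_mem k (mem569 2 0 0 (by norm_num))) β)⟩

/-!
Every element `r` of `(t⁶ + αt¹⁰, t⁹ + βt¹⁰)` satisfies `r₁₀ = α r₆ + β r₉` on its coefficients:
writing `r = p (t⁶ + αt¹⁰) + q (t⁹ + βt¹⁰)` with `p, q ∈ A`, the defect is `p₄ + q₁ - β p₃`, and
`1, 3, 4` are gaps of `⟨5, 6, 9⟩`. Applied to `t⁶ + α₁t¹⁰` and `t⁹ + β₁t¹⁰`, this gives `α₁ = α`
and `β₁ = β`.
-/

lemma eq_zero_or_le_of_mem_closure {s : Set ℕ} {m : ℕ} (hs : ∀ x ∈ s, m ≤ x) {n : ℕ}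
    (hn : n ∈ AddSubmonoid.closure s) : n = 0 ∨ m ≤ n := by
  induction hn using AddSubmonoid.closure_induction with
  | mem x hx => exact Or.inr (hs x hx)
  | zero => exact Or.inl rfl
  | add x y _ _ ihx ihy => omega

lemma coeff_eq_zero_of_notMem {S : AddSubmonoid ℕ} (r : semigroupRing k S) {n : ℕ}
    (hn : n ∉ S) : coeff n (r : PowerSeries k) = 0 :=
  not_not.mp fun h => hn (r.2 n h)

lemma coeff_A569_eq_zero_of_lt_five {n : ℕ} (r : A569 k) (h0 : n ≠ 0) (h5 : n < 5) :
    coeff n (r : PowerSeries k) = 0 := by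
  refine coeff_eq_zero_of_notMem k r fun hn => ?_
  have := eq_zero_or_le_of_mem_closure (m := 5) (by simp) hn
  omega

lemma coeff_ten_mul_add_mul (α β : k) {p q : PowerSeries k} (hp3 : coeff 3 p = 0)
    (hp4 : coeff 4 p = 0) (hq1 : coeff 1 q = 0) :
    coeff 10 (p * (X ^ 6 + α • X ^ 10) + q * (X ^ 9 + β • X ^ 10)) =
      α * coeff 6 (p * (X ^ 6 + α • X ^ 10) + q * (X ^ 9 + β • X ^ 10)) +
        β * coeff 9 (p * (X ^ 6 + α • X ^ 10) + q * (X ^ 9 + β • X ^ 10)) := by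
  simp only [mul_add, map_add, mul_smul_comm, map_smul, coeff_mul_X_pow', smul_eq_mul]
  norm_num [hp3, hp4, hq1]

lemma coeff_ten_eq_of_mem_span (α β : k) {r : A569 k}
    (hr : r ∈ Ideal.span {f569 k α, g569 k β}) :
    coeff 10 (r : PowerSeries k) =
      α * coeff 6 (r : PowerSeries k) + β * coeff 9 (r : PowerSeries k) := by
  obtain ⟨p, q, rfl⟩ := Ideal.mem_span_pair.mp hr
  exact coeff_ten_mul_add_mul k α β
    (coeff_A569_eq_zero_of_lt_five k p (by norm_num) (by norm_num))
    (coeff_A569_eq_zero_of_lt_five k p (by norm_num) (by norm_num))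
    (coeff_A569_eq_zero_of_lt_five k q (by norm_num) (by norm_num))

theorem ulrich_ideal_569_params_unique (α β α₁ β₁ : k)
    (heq : Ideal.span {f569 k α, g569 k β} = Ideal.span {f569 k α₁, g569 k β₁}) :
    α = α₁ ∧ β = β₁ := by
  have hf : f569 k α₁ ∈ Ideal.span {f569 k α, g569 k β} := heq ▸ Ideal.subset_span (by simp)
  have hg : g569 k β₁ ∈ Ideal.span {f569 k α, g569 k β} := heq ▸ Ideal.subset_span (by simp)
  constructor
  · simpa [f569, coeff_X_pow] using (coeff_ten_eq_of_mem_span k α β hf).symm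
  · simpa [g569, coeff_X_pow] using (coeff_ten_eq_of_mem_span k α β hg).symm
end
end

section
/- There is no Ulrich ideal I of A = k⟦t⁵, t¹¹⟧ admitting elements f, g ∈ I with I = (f, g), I² = fI, o(f) = 10 and o(g) = 16. -/
noncomputable section

open PowerSeries

set_option synthInstance.maxHeartbeats 400000
set_option maxHeartbeats 800000

variable (k : Type*) [Field k]

/-- `A = k⟦t⁵, t¹¹⟧`. -/
def A511 : Subalgebra k (PowerSeries k) :=
  semigroupRing k (AddSubmonoid.closure ({5, 11} : Set ℕ))

lemma mem511 {n : ℕ} (a b : ℕ) (h : a * 5 + b * 11 = n) :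
    n ∈ AddSubmonoid.closure ({5, 11} : Set ℕ) := by
  subst h
  have h5 : (5 : ℕ) ∈ AddSubmonoid.closure ({5, 11} : Set ℕ) :=
    AddSubmonoid.subset_closure (by norm_num)
  have h11 : (11 : ℕ) ∈ AddSubmonoid.closure ({5, 11} : Set ℕ) :=
    AddSubmonoid.subset_closure (by norm_num)
  simpa [smul_eq_mul] using add_mem (nsmul_mem h5 a) (nsmul_mem h11 b)

/-- `f = t²⁰ + αt²¹ + βt²² + γt²⁷ + δt³³` as an element of `A = k⟦t⁵,t¹¹⟧`. -/
def genF (α β γ δ : k) : A511 k :=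
  ⟨X ^ 20 + α • X ^ 21 + β • X ^ 22 + γ • X ^ 27 + δ • X ^ 33, by
    refine add_mem (add_mem (add_mem (add_mem (X_pow_mem k (mem511 4 0 (by norm_num)))
      (Subalgebra.smul_mem _ (X_pow_mem k (mem511 2 1 (by norm_num))) α))
      (Subalgebra.smul_mem _ (X_pow_mem k (mem511 0 2 (by norm_num))) β))
      (Subalgebra.smul_mem _ (X_pow_mem k (mem511 1 2 (by norm_num))) γ))
      (Subalgebra.smul_mem _ (X_pow_mem k (mem511 0 3 (by norm_num))) δ)⟩

/-- `g = t²⁶ + εt²⁷ + τt³³` as an element of `A = k⟦t⁵,t¹¹⟧`. -/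
def genG (ε τ : k) : A511 k :=
  ⟨X ^ 26 + ε • X ^ 27 + τ • X ^ 33, by
    refine add_mem (add_mem (X_pow_mem k (mem511 3 1 (by norm_num)))
      (Subalgebra.smul_mem _ (X_pow_mem k (mem511 1 2 (by norm_num))) ε))
      (Subalgebra.smul_mem _ (X_pow_mem k (mem511 0 3 (by norm_num))) τ)⟩

/-- `f = t¹⁰ + α₁t¹¹ + α₂t¹⁶ + α₃t²²` as an element of `A = k⟦t⁵,t¹¹⟧`. -/
def genF10 (α₁ α₂ α₃ : k) : A511 k :=
  ⟨X ^ 10 + α₁ • X ^ 11 + α₂ • X ^ 16 + α₃ • X ^ 22, by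
    refine add_mem (add_mem (add_mem (X_pow_mem k (mem511 2 0 (by norm_num)))
      (Subalgebra.smul_mem _ (X_pow_mem k (mem511 0 1 (by norm_num))) α₁))
      (Subalgebra.smul_mem _ (X_pow_mem k (mem511 1 1 (by norm_num))) α₂))
      (Subalgebra.smul_mem _ (X_pow_mem k (mem511 0 2 (by norm_num))) α₃)⟩

/-- `g = t²⁷` as an element of `A = k⟦t⁵,t¹¹⟧`. -/
def genG27 : A511 k :=
  ⟨X ^ 27, X_pow_mem k (mem511 1 2 (by norm_num))⟩

/-- `t³² + εt³³` as an element of `A = k⟦t⁵,t¹¹⟧`. -/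
def elt32 (ε : k) : A511 k :=
  ⟨X ^ 32 + ε • X ^ 33, by
    refine add_mem (X_pow_mem k (mem511 2 2 (by norm_num)))
      (Subalgebra.smul_mem _ (X_pow_mem k (mem511 0 3 (by norm_num))) ε)⟩

/-!
Orders of elements of a semigroup ring lie in its semigroup, and for `x ∈ I` the relation
`I² = fI` writes `x² = f y` with `y ∈ I`, so `o(y) = 2 o(x) - o(f)`. Starting from `o(g) = 16`
with `o(f) = 10` this produces elements of `I` of orders `22` and then `34`, but `34 ∉ ⟨5, 11⟩`.
-/

section

variable {k}

theorem semigroupRing.mem_of_order_eq {S : AddSubmonoid ℕ} {f : semigroupRing k S} {n : ℕ}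
    (h : order (f : PowerSeries k) = n) : n ∈ S :=
  f.2 n (order_eq_nat.mp h).1

theorem exists_mem_mul_eq_mul_self_of_sq_eq {R : Type*} [CommSemiring R] {I : Ideal R}
    {f x : R} (hsq : I ^ 2 = Ideal.span {f} * I) (hx : x ∈ I) : ∃ y ∈ I, f * y = x * x :=
  Ideal.mem_span_singleton_mul.mp (hsq ▸ sq x ▸ Ideal.pow_mem_pow hx 2)

theorem exists_mem_order_eq_of_sq_eq {A : Subalgebra k (PowerSeries k)} {I : Ideal A}
    {f x : A} {a b c : ℕ} (hsq : I ^ 2 = Ideal.span {f} * I) (hx : x ∈ I)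
    (hf : order (f : PowerSeries k) = a) (hxo : order (x : PowerSeries k) = b)
    (habc : a + c = b + b) : ∃ y ∈ I, order (y : PowerSeries k) = c := by
  obtain ⟨y, hyI, hfy⟩ := exists_mem_mul_eq_mul_self_of_sq_eq hsq hx
  refine ⟨y, hyI, ?_⟩
  have hord := congrArg (fun z : A => order (z : PowerSeries k)) hfy
  simp only [MulMemClass.coe_mul, order_mul, hf, hxo] at hord
  refine ENat.add_right_injective_of_ne_top (ENat.natCast_ne_top a) ?_
  simp only [hord]
  exact_mod_cast habc.symm

end

theorem thirtyFour_notMem_closure_five_eleven :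
    (34 : ℕ) ∉ AddSubmonoid.closure ({5, 11} : Set ℕ) := by
  simp only [AddSubmonoid.mem_closure_pair, smul_eq_mul]
  omega

/-- no Ulrich ideal of `A = k⟦t⁵,t¹¹⟧` admits generators `f, g` with
`I = (f,g)`, `I² = fI`, `o(f) = 10` and `o(g) = 16`. -/
theorem no_ulrich_ideal_511_with_orders_10_16 :
    ¬ ∃ (I : Ideal (A511 k)) (f g : A511 k),
      IsUlrichIdeal k (A511 k) I ∧ f ∈ I ∧ g ∈ I ∧
      I = Ideal.span {f, g} ∧ I ^ 2 = Ideal.span {f} * I ∧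
      order (f : PowerSeries k) = 10 ∧ order (g : PowerSeries k) = 16 := by
  rintro ⟨I, f, g, -, -, hgI, -, hsq, hf, hg⟩
  obtain ⟨h, hhI, hh⟩ := exists_mem_order_eq_of_sq_eq (c := 22) hsq hgI hf hg rfl
  obtain ⟨h', -, hh'⟩ := exists_mem_order_eq_of_sq_eq (c := 34) hsq hhI hf hh rfl
  exact thirtyFour_notMem_closure_five_eleven (semigroupRing.mem_of_order_eq hh')
end
end

section
/- Let α₁, α₂, α₃, α₁', α₂', α₃' ∈ k with α₁ ≠ 0 and α₁' ≠ 0, and suppose that the ideals (t¹⁰ + α₁t¹¹ + α₂t¹⁶ + α₃t²², t²⁷) and (t¹⁰ + α₁'t¹¹ + α₂'t¹⁶ + α₃'t²², t²⁷) of A = k⟦t⁵, t¹¹⟧ are equal. Then α₁ = α₁', α₂ = α₂' and α₃ = α₃'. -/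
noncomputable section

open PowerSeries

set_option synthInstance.maxHeartbeats 400000
set_option maxHeartbeats 800000

variable (k : Type*) [Field k]

/-! If the two ideals agree, then `f' = u f + v t²⁷` with `u ∈ A`. Below degree 27 this reads
`f' ≡ u f`, and since `1, …, 4, 6, …, 9, 12` are gaps of `⟨5, 11⟩` while `f'` has no terms in
degrees `15, 20, 21`, it forces `u ≡ 1 mod t¹³`. Hence `f' ≡ f mod t²³`, and the parameters are
the coefficients in degrees `11, 16, 22`. -/

section NormalForm

variable {k}

lemma coeff_eq_zero_of_mem_semigroupRing {S : AddSubmonoid ℕ} {u : PowerSeries k}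
    (hu : u ∈ semigroupRing k S) {n : ℕ} (hn : n ∉ S) : coeff n u = 0 :=
  not_not.mp fun h => hn (hu n h)

lemma coeff_eq_zero_of_mem_A511 {u : PowerSeries k} (hu : u ∈ A511 k) {n : ℕ}
    (hn : ∀ a b : ℕ, a * 5 + b * 11 ≠ n) : coeff n u = 0 := by
  refine coeff_eq_zero_of_mem_semigroupRing hu fun h => ?_
  rw [AddSubmonoid.mem_closure_pair] at h
  obtain ⟨a, b, hab⟩ := h
  exact hn a b (by simpa [smul_eq_mul] using hab)

def normalForm (a b c : k) : PowerSeries k :=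
  X ^ 10 + a • X ^ 11 + b • X ^ 16 + c • X ^ 22

lemma coe_genF10 (a b c : k) : (genF10 k a b c : PowerSeries k) = normalForm a b c := rfl

lemma coeff_mul_normalForm (u : PowerSeries k) (a b c : k) (n : ℕ) :
    coeff n (u * normalForm a b c) =
      (if 10 ≤ n then coeff (n - 10) u else 0) + a * (if 11 ≤ n then coeff (n - 11) u else 0)
        + b * (if 16 ≤ n then coeff (n - 16) u else 0)
        + c * (if 22 ≤ n then coeff (n - 22) u else 0) := by
  simp only [normalForm, mul_add, mul_smul_comm, map_add, coeff_smul, coeff_mul_X_pow',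
    smul_eq_mul]

lemma coeff_normalForm (a b c : k) (n : ℕ) :
    coeff n (normalForm a b c) = (if n = 10 then 1 else 0) + (if n = 11 then a else 0)
      + (if n = 16 then b else 0) + (if n = 22 then c else 0) := by
  simp [normalForm, coeff_X_pow]

lemma X_pow_dvd_sub_one_of_X_pow_dvd {u : PowerSeries k} (hu : u ∈ A511 k) {a b c a' b' c' : k}
    (h : X ^ 27 ∣ normalForm a' b' c' - u * normalForm a b c) : X ^ 13 ∣ u - 1 := by
  have hcoeff (n : ℕ) (hn : n < 27) :
      coeff n (u * normalForm a b c) = coeff n (normalForm a' b' c') := by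
    rw [eq_comm, ← sub_eq_zero, ← map_sub]
    exact (X_pow_dvd_iff.mp h) n hn
  have gap (n : ℕ) (hn : ∀ a b : ℕ, a * 5 + b * 11 ≠ n) := coeff_eq_zero_of_mem_A511 hu hn
  have h10 := hcoeff 10 (by norm_num)
  have h15 := hcoeff 15 (by norm_num)
  have h20 := hcoeff 20 (by norm_num)
  have h21 := hcoeff 21 (by norm_num)
  simp only [coeff_mul_normalForm, coeff_normalForm] at h10 h15 h20 h21
  norm_num at h10 h15 h20 h21
  have c4 := gap 4 (by omega)
  have c9 := gap 9 (by omega)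
  have c5 : coeff 5 u = 0 := by linear_combination h15 - a * c4
  have c10 : coeff 10 u = 0 := by linear_combination h20 - a * c9 - b * c4
  have c11 : coeff 11 u = 0 := by linear_combination h21 - a * c10 - b * c5
  refine X_pow_dvd_iff.mpr fun n hn => ?_
  rw [map_sub, coeff_one]
  interval_cases n
  · simp [h10]
  all_goals
    rw [if_neg (by norm_num), sub_zero]
    first
    | assumption
    | exact gap _ fun _ _ => by omega

lemma X_pow_ten_dvd_normalForm (a b c : k) : X ^ 10 ∣ normalForm a b c :=
  X_pow_dvd_iff.mpr fun n hn => by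
    simp [coeff_normalForm, hn.ne, (hn.trans (by norm_num : 10 < 11)).ne,
      (hn.trans (by norm_num : 10 < 16)).ne, (hn.trans (by norm_num : 10 < 22)).ne]

lemma eq_of_X_pow_dvd_normalForm_sub {a b c a' b' c' : k}
    (h : X ^ 23 ∣ normalForm a' b' c' - normalForm a b c) : a = a' ∧ b = b' ∧ c = c' := by
  have hcoeff (n : ℕ) (hn : n < 23) := X_pow_dvd_iff.mp h n hn
  have h11 := hcoeff 11 (by norm_num)
  have h16 := hcoeff 16 (by norm_num)
  have h22 := hcoeff 22 (by norm_num)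
  simp only [map_sub, coeff_normalForm] at h11 h16 h22
  norm_num at h11 h16 h22
  exact ⟨(sub_eq_zero.mp h11).symm, (sub_eq_zero.mp h16).symm, (sub_eq_zero.mp h22).symm⟩

end NormalForm

theorem params_unique_511_normal_form_10_27 (α₁ α₂ α₃ α₁' α₂' α₃' : k)
    (heq : Ideal.span {genF10 k α₁ α₂ α₃, genG27 k}
         = Ideal.span {genF10 k α₁' α₂' α₃', genG27 k}) :
    α₁ = α₁' ∧ α₂ = α₂' ∧ α₃ = α₃' := by
  have hmem : genF10 k α₁' α₂' α₃' ∈ Ideal.span {genF10 k α₁ α₂ α₃, genG27 k} :=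
    heq ▸ Ideal.subset_span (by simp)
  obtain ⟨u, v, huv⟩ := Ideal.mem_span_pair.mp hmem
  have hv : X ^ 27 ∣ normalForm α₁' α₂' α₃' - (u : PowerSeries k) * normalForm α₁ α₂ α₃ := by
    refine ⟨v, ?_⟩
    rw [← coe_genF10, ← coe_genF10, ← huv]
    simp [genG27, mul_comm]
  have hu : X ^ 13 ∣ (u : PowerSeries k) - 1 := X_pow_dvd_sub_one_of_X_pow_dvd u.2 hv
  have hf : X ^ 10 ∣ normalForm α₁ α₂ α₃ := X_pow_ten_dvd_normalForm α₁ α₂ α₃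
  refine eq_of_X_pow_dvd_normalForm_sub ?_
  calc (X : PowerSeries k) ^ 23 ∣
        (normalForm α₁' α₂' α₃' - (u : PowerSeries k) * normalForm α₁ α₂ α₃)
          + ((u : PowerSeries k) - 1) * normalForm α₁ α₂ α₃ :=
        dvd_add ((pow_dvd_pow X (by norm_num)).trans hv) (pow_add (X : PowerSeries k) 13 10 ▸ mul_dvd_mul hu hf)
    _ = normalForm α₁' α₂' α₃' - normalForm α₁ α₂ α₃ := by ring
end
end

section
/- Let δ, ε, τ, δ₁, ε₁, τ₁ ∈ k with ε ≠ 0 and ε₁ ≠ 0, and suppose that the ideals (t²⁰ + 3εt²¹ + ε²t²² + (2τ − 55ε⁷)t²⁷ + δt³³, t²⁶ + 2εt²⁷ + τt³³) and (t²⁰ + 3ε₁t²¹ + ε₁²t²² + (2τ₁ − 55ε₁⁷)t²⁷ + δ₁t³³, t²⁶ + 2ε₁t²⁷ + τ₁t³³) of A = k⟦t⁵, t¹¹⟧ are equal and are Ulrich ideals of A. Then δ = δ₁, ε = ε₁ and τ = τ₁. -/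
/-!
Every element of `A = k⟦t⁵, t¹¹⟧` has zero coefficients at the gaps `1, 2, 3, 4, 6, 7, 8, 9, 12, 13`
of `⟨5, 11⟩`. If `I = (f, g) = (f₁, g₁)`, write `f₁ = p f + q g` and `g₁ = p' f + q' g` with
`p, q, p', q' ∈ A`; since `f` and `g` have orders `20` and `26`, the coefficients of `t²⁰, …, t³³`
in such a combination involve only the coefficients of `p` at `0, 5, 10, 11` and of `q` at `0, 5`.
Comparing them with the coefficients of `f₁` and `g₁` gives `3ε = 3ε₁` and `2ε = 2ε₁` (hence
`ε = ε₁` in every characteristic), `δ = δ₁` and `τ = τ₁`. The coefficients of `t³¹` and `t³²` give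
`p₁₁ + q₅ = 0` and `ε (3 p₁₁ + 2 q₅) = 0`, so `p₁₁ = 0` because `ε ≠ 0`.
-/

noncomputable section

open PowerSeries

set_option synthInstance.maxHeartbeats 400000
set_option maxHeartbeats 800000

variable (k : Type*) [Field k]

section NormalForm

variable {k}

lemma coeff_eq_zero_of_notMem_semigroupRing {S : AddSubmonoid ℕ} {f : PowerSeries k}
    (hf : f ∈ semigroupRing k S) {n : ℕ} (hn : n ∉ S) : coeff n f = 0 :=
  not_not.mp (mt (hf n) hn)

lemma coeff_eq_zero_of_mem_A511_s9 {f : PowerSeries k} (hf : f ∈ A511 k) {n : ℕ}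
    (hn : ∀ i j : ℕ, i * 5 + j * 11 ≠ n) : coeff n f = 0 :=
  coeff_eq_zero_of_notMem_semigroupRing hf <| by
    simpa [AddSubmonoid.mem_closure_pair, smul_eq_mul] using hn

abbrev normalF (ε τ δ : k) : A511 k := genF k (3 * ε) (ε ^ 2) (2 * τ - 55 * ε ^ 7) δ

abbrev normalG (ε τ : k) : A511 k := genG k (2 * ε) τ

variable {ε τ δ : k}

theorem coeff_mul_normalF_add_mul_normalG {p q u : A511 k}
    (hu : p * normalF ε τ δ + q * normalG ε τ = u) :
    coeff 20 u.1 = coeff 0 p.1 ∧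
    coeff 21 u.1 = 3 * ε * coeff 0 p.1 ∧
    coeff 25 u.1 = coeff 5 p.1 ∧
    coeff 26 u.1 = 3 * ε * coeff 5 p.1 + coeff 0 q.1 ∧
    coeff 27 u.1 = (2 * τ - 55 * ε ^ 7) * coeff 0 p.1 + ε ^ 2 * coeff 5 p.1 + 2 * ε * coeff 0 q.1 ∧
    coeff 30 u.1 = coeff 10 p.1 ∧
    coeff 31 u.1 = 3 * ε * coeff 10 p.1 + coeff 11 p.1 + coeff 5 q.1 ∧
    coeff 32 u.1 = ε ^ 2 * coeff 10 p.1 + 3 * ε * coeff 11 p.1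
      + (2 * τ - 55 * ε ^ 7) * coeff 5 p.1 + 2 * ε * coeff 5 q.1 ∧
    coeff 33 u.1 = δ * coeff 0 p.1 + ε ^ 2 * coeff 11 p.1 + τ * coeff 0 q.1 := by
  subst hu
  simp only [genF, genG, Subalgebra.coe_add, Subalgebra.coe_mul, mul_add, mul_smul_comm, map_add,
    map_smul, coeff_mul_X_pow', smul_eq_mul]
  norm_num
  simp (disch := intros; omega) only [coeff_eq_zero_of_mem_A511_s9 p.2, coeff_eq_zero_of_mem_A511_s9 q.2]
  refine ⟨trivial, ?_, ?_, ?_, ?_, ?_, ?_, ?_⟩ <;> ring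

theorem coeff_eleven_eq_zero_of_mul_normalF_add_mul_normalG (hε : ε ≠ 0) {p q u : A511 k}
    (hu : p * normalF ε τ δ + q * normalG ε τ = u) (h25 : coeff 25 u.1 = 0)
    (h30 : coeff 30 u.1 = 0) (h31 : coeff 31 u.1 = 0) (h32 : coeff 32 u.1 = 0) :
    coeff 11 p.1 = 0 := by
  obtain ⟨-, -, c25, -, -, c30, c31, c32, -⟩ := coeff_mul_normalF_add_mul_normalG hu
  have : ε * coeff 11 p.1 = 0 := by
    linear_combination h32 - c32 + 2 * ε * (c31 - h31) - 5 * ε ^ 2 * (c30 - h30)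
      + (2 * τ - 55 * ε ^ 7) * (c25 - h25)
  exact (mul_eq_zero.mp this).resolve_left hε

variable {ε₁ τ₁ δ₁ : k}

theorem eq_of_normalF_mem_span (hε : ε ≠ 0)
    (h : normalF ε₁ τ₁ δ₁ ∈ Ideal.span {normalF ε τ δ, normalG ε τ}) :
    3 * ε = 3 * ε₁ ∧ δ = δ₁ := by
  obtain ⟨p, q, hu⟩ := Ideal.mem_span_pair.mp h
  have h11 : coeff 11 p.1 = 0 := by
    refine coeff_eleven_eq_zero_of_mul_normalF_add_mul_normalG hε hu ?_ ?_ ?_ ?_ <;>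
      simp [genF, coeff_X_pow]
  obtain ⟨c20, c21, c25, c26, -, -, -, -, c33⟩ := coeff_mul_normalF_add_mul_normalG hu
  simp only [genF, map_add, coeff_X_pow, ↓reduceIte, map_smul, Nat.reduceEqDiff, smul_eq_mul, mul_zero,
    add_zero, coeff_zero_eq_constantCoeff, Nat.succ_ne_self, mul_one, zero_add] at c20 c21 c25 c26 c33
  exact ⟨by linear_combination 3 * ε * c20 - c21,
    by linear_combination δ * c20 - c33 - ε ^ 2 * h11 + τ * c26 - 3 * ε * τ * c25⟩

theorem eq_of_normalG_mem_span (hε : ε ≠ 0)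
    (h : normalG ε₁ τ₁ ∈ Ideal.span {normalF ε τ δ, normalG ε τ}) :
    2 * ε = 2 * ε₁ ∧ τ = τ₁ := by
  obtain ⟨p, q, hu⟩ := Ideal.mem_span_pair.mp h
  have h11 : coeff 11 p.1 = 0 := by
    refine coeff_eleven_eq_zero_of_mul_normalF_add_mul_normalG hε hu ?_ ?_ ?_ ?_ <;>
      simp [genG, coeff_X_pow]
  obtain ⟨c20, -, c25, c26, c27, -, -, -, c33⟩ := coeff_mul_normalF_add_mul_normalG hu
  simp only [genG, map_add, coeff_X_pow, Nat.reduceEqDiff, ↓reduceIte, map_smul, smul_eq_mul, mul_zero,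
    add_zero, coeff_zero_eq_constantCoeff, Nat.succ_ne_self, mul_one, zero_add] at c20 c25 c26 c27 c33
  exact ⟨by linear_combination 2 * ε * c26 - c27 - 5 * ε ^ 2 * c25 + (2 * τ - 55 * ε ^ 7) * c20,
    by linear_combination τ * c26 - c33 - 3 * ε * τ * c25 + δ * c20 - ε ^ 2 * h11⟩

end NormalForm

theorem ulrich_ideal_511_orders_20_26_params_unique (δ ε τ δ₁ ε₁ τ₁ : k)
    (hε : ε ≠ 0)
    (heq : Ideal.span {genF k (3 * ε) (ε ^ 2) (2 * τ - 55 * ε ^ 7) δ, genG k (2 * ε) τ}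
         = Ideal.span {genF k (3 * ε₁) (ε₁ ^ 2) (2 * τ₁ - 55 * ε₁ ^ 7) δ₁, genG k (2 * ε₁) τ₁}) :
    δ = δ₁ ∧ ε = ε₁ ∧ τ = τ₁ := by
  have hF : normalF ε₁ τ₁ δ₁ ∈ Ideal.span {normalF ε τ δ, normalG ε τ} :=
    heq ▸ Ideal.subset_span (Set.mem_insert _ _)
  have hG : normalG ε₁ τ₁ ∈ Ideal.span {normalF ε τ δ, normalG ε τ} :=
    heq ▸ Ideal.subset_span (Set.mem_insert_of_mem _ rfl)
  obtain ⟨h3ε, hδ⟩ := eq_of_normalF_mem_span hε hF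
  obtain ⟨h2ε, hτ⟩ := eq_of_normalG_mem_span hε hG
  exact ⟨hδ, by linear_combination h3ε - h2ε, hτ⟩
end
end
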